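/- Let E, F ⊆ ℝ^d be dust-like self-similar sets with contraction vectors ρ = (ρ₁, …, ρ_m) and τ = (τ₁, …, τ_n) respectively, let f : E → F be a bi-Lipschitz bijection, let s be their common Hausdorff dimension, and let n₀ ∈ ℕ be such that every image f(E_w) of a cylinder admits a maximum decomposition with respect to F and n₀. Let E_{i₀} be a stable cylinder for f, i.e. there is c > 0 with H^s(f(E_{i₀ j})) = c · H^s(E_{i₀ j}) for every finite word j. For each finite word i over {1, …, m}, let f(E_{i₀ i}) = ⋃_{r=1}^{p_i} F_{k j_r} be the maximum decomposition of f(E_{i₀ i}). Then the set M = ⋃_i { H^s(E_{i₀ i}) / H^s(F_{k j_r}) : 1 ≤ r ≤ p_i }, taken over all finite words i, is finite; consequently the sets M' = ⋃_i { diam(E_{i₀ i}) / diam(F_{k j_r}) : 1 ≤ r ≤ p_i } and M'' = ⋃_i { ρ_{i₀ i} / τ_{k j_r} : 1 ≤ r ≤ p_i } are finite. -/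

import Mathlib

open Set Metric MeasureTheory

noncomputable section

/-- Two subsets of a metric space are Lipschitz equivalent if there is a
bi-Lipschitz bijection between them. -/
def LipschitzEquivalent {X : Type*} [MetricSpace X] (E F : Set X) : Prop :=
  ∃ (f : X → X) (C : ℝ), 0 < C ∧ Set.BijOn f E F ∧
    ∀ x ∈ E, ∀ y ∈ E,
      C⁻¹ * dist x y ≤ dist (f x) (f y) ∧ dist (f x) (f y) ≤ C * dist x y

/-- `φ` is a similarity with ratio `r`. -/
def IsSimilarity {X : Type*} [MetricSpace X] (r : ℝ) (φ : X → X) : Prop :=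
  ∀ x y, dist (φ x) (φ y) = r * dist x y

/-- `ρ = (ρ₁, …, ρ_m)` is a contraction vector for `ℝ^d`. -/
def IsContractionVector (d m : ℕ) (ρ : Fin m → ℝ) : Prop :=
  (∀ j, ρ j ∈ Set.Ioo (0:ℝ) 1) ∧ ∑ j, ρ j ^ d < 1

/-- `E` is a dust-like self-similar set with contraction vector `ρ`,
i.e. `E ∈ D(ρ)`. -/
def IsDustLike {X : Type*} [MetricSpace X] {m : ℕ} (ρ : Fin m → ℝ) (E : Set X) : Prop :=
  E.Nonempty ∧ IsCompact E ∧
  ∃ φ : Fin m → X → X,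
    (∀ j, IsSimilarity (ρ j) (φ j)) ∧
    E = ⋃ j, φ j '' E ∧
    Pairwise fun j k => Disjoint (φ j '' E) (φ k '' E)
/-- For a finite word `w = i₁⋯i_k`, the composed map `φ_w = φ_{i₁} ∘ ⋯ ∘ φ_{i_k}`
(the identity for the empty word). `wordMap φ w '' E` is the cylinder `E_w`. -/
def wordMap {X : Type*} {m : ℕ} (φ : Fin m → X → X) (w : List (Fin m)) : X → X :=
  w.foldr (fun i g => φ i ∘ g) id
/-- `(k, p, js)` is the maximum decomposition of `A` with respect to the
IFS `ψ` of `F` and `n₀`: `F_k` is the smallest cylinder of `F` containing `A`,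
the words `js r` all have length exactly `n₀`, and `A` is the disjoint union
of the cylinders `F_{k (js r)}`. -/
def IsMaxDecomp {X : Type*} [MetricSpace X] {n : ℕ}
    (ψ : Fin n → X → X) (F : Set X) (n₀ : ℕ) (A : Set X)
    (k : List (Fin n)) (p : ℕ) (js : Fin p → List (Fin n)) : Prop :=
  A ⊆ wordMap ψ k '' F ∧
  (∀ k' : List (Fin n), A ⊆ wordMap ψ k' '' F → wordMap ψ k '' F ⊆ wordMap ψ k' '' F) ∧
  (∀ r, (js r).length = n₀) ∧
  (Pairwise fun r r' =>
    Disjoint (wordMap ψ (k ++ js r) '' F) (wordMap ψ (k ++ js r') '' F)) ∧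
  A = ⋃ r, wordMap ψ (k ++ js r) '' F


/-!
Everything rests on the exact scaling of cylinders: `E_w` is the image of `E` under a similarity
of ratio `ρ_w`, so `μH[s] E_w = ρ_w ^ s μH[s] E` and `diam E_w = ρ_w diam E`, and likewise in `F`.
Measuring the maximum decomposition `f(E_{i₀ i}) = ⋃_r F_{k j_r}` and using stability gives
`c ρ_{i₀ i} ^ s μH[s] E = τ_k ^ s (∑_r τ_{j_r} ^ s) μH[s] F`. As `0 < μH[s] E < ∞` and
`μH[s] F < ∞`, the ratio `ρ_{i₀ i} / τ_k` is determined by the set of words `j_r`, all of length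
`n₀`, so it takes finitely many values. Dividing by `τ_{j_r}` shows that `M''` is finite, and `M'`
and `M` are images of `M''`.

The bounds on `μH[s] E` are the classical ones. Covering `E` by its cylinders of one level gives
`μH[s] E ≤ (diam E) ^ s`. For the lower bound let `δ` be the gap between the first-level pieces:
a set of diameter `D` meets `E` inside a single cylinder `E_w` with `δ ρ_w ≤ D`, and every cover of
`E` by cylinders has `∑ ρ_w ^ s ≥ 1`, by induction on the word length once compactness has made
the cover finite (cylinders are relatively open in `E`).
-/

open Filter Topology
open scoped ENNReal NNReal

namespace IsSimilarity

variable {X : Type*} [MetricSpace X] {r r' : ℝ} {φ φ' : X → X}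

lemma comp (h : IsSimilarity r φ) (h' : IsSimilarity r' φ') : IsSimilarity (r * r') (φ ∘ φ') :=
  fun x y => by rw [Function.comp_apply, Function.comp_apply, h, h', mul_assoc]

lemma lipschitzWith (h : IsSimilarity r φ) (hr : 0 ≤ r) : LipschitzWith r.toNNReal φ :=
  LipschitzWith.of_dist_le_mul fun x y => by rw [h, Real.coe_toNNReal r hr]

lemma antilipschitzWith (h : IsSimilarity r φ) (hr : 0 < r) : AntilipschitzWith r⁻¹.toNNReal φ :=
  AntilipschitzWith.of_le_mul_dist fun x y => by
    rw [h, Real.coe_toNNReal _ (inv_nonneg.2 hr.le), inv_mul_cancel_left₀ hr.ne']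

lemma injective (h : IsSimilarity r φ) (hr : 0 < r) : Function.Injective φ :=
  (h.antilipschitzWith hr).injective

lemma ediam_image (h : IsSimilarity r φ) (hr : 0 < r) (A : Set X) :
    ediam (φ '' A) = ENNReal.ofReal r * ediam A := by
  refine ((h.lipschitzWith hr.le).ediam_image_le A).antisymm (ENNReal.mul_le_of_le_div' ?_)
  rw [div_eq_mul_inv, mul_comm]
  change _ ≤ (ENNReal.ofReal r)⁻¹ * _
  rw [← ENNReal.ofReal_inv_of_pos hr]
  exact (h.antilipschitzWith hr).le_mul_ediam_image A

lemma diam_image (h : IsSimilarity r φ) (hr : 0 < r) (A : Set X) :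
    diam (φ '' A) = r * diam A := by
  rw [Metric.diam, h.ediam_image hr, ENNReal.toReal_mul, ENNReal.toReal_ofReal hr.le, Metric.diam]

lemma hausdorffMeasure_image [MeasurableSpace X] [BorelSpace X] (h : IsSimilarity r φ)
    (hr : 0 < r) {s : ℝ} (hs : 0 ≤ s) (A : Set X) :
    μH[s] (φ '' A) = ENNReal.ofReal r ^ s * μH[s] A := by
  refine ((h.lipschitzWith hr.le).hausdorffMeasure_image_le hs A).antisymm ?_
  have hA := (h.antilipschitzWith hr).le_hausdorffMeasure_image hs A
  have hr' : ENNReal.ofReal r ^ s * ENNReal.ofReal r⁻¹ ^ s = 1 := by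
    rw [← ENNReal.mul_rpow_of_nonneg _ _ hs, ← ENNReal.ofReal_mul hr.le, mul_inv_cancel₀ hr.ne',
      ENNReal.ofReal_one, ENNReal.one_rpow]
  calc ENNReal.ofReal r ^ s * μH[s] A
      ≤ ENNReal.ofReal r ^ s * (ENNReal.ofReal r⁻¹ ^ s * μH[s] (φ '' A)) := by gcongr; exact hA
    _ = μH[s] (φ '' A) := by rw [← mul_assoc, hr', one_mul]

end IsSimilarity

section Words

variable {X : Type*} {m : ℕ} {ρ : Fin m → ℝ} {φ : Fin m → X → X}

lemma wordMap_cons (φ : Fin m → X → X) (a : Fin m) (w : List (Fin m)) :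
    wordMap φ (a :: w) = φ a ∘ wordMap φ w := rfl

lemma wordMap_append (φ : Fin m → X → X) (v w : List (Fin m)) :
    wordMap φ (v ++ w) = wordMap φ v ∘ wordMap φ w := by
  induction v with
  | nil => rfl
  | cons a v ih => rw [List.cons_append, wordMap_cons, wordMap_cons, ih, Function.comp_assoc]

lemma isSimilarity_wordMap [MetricSpace X] (hφ : ∀ j, IsSimilarity (ρ j) (φ j))
    (w : List (Fin m)) : IsSimilarity (w.map ρ).prod (wordMap φ w) := by
  induction w with
  | nil => intro x y; simp [wordMap]
  | cons a w ih => simpa only [List.map_cons, List.prod_cons, wordMap_cons] using (hφ a).comp ih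

lemma prod_map_pos (hρ : ∀ j, 0 < ρ j) (w : List (Fin m)) : 0 < (w.map ρ).prod :=
  List.prod_pos fun _ ha => by obtain ⟨j, -, rfl⟩ := List.mem_map.1 ha; exact hρ j

lemma prod_map_le_pow {q : ℝ} (hρ : ∀ j, ρ j ∈ Icc 0 q) (w : List (Fin m)) :
    (w.map ρ).prod ≤ q ^ w.length := by
  induction w with
  | nil => simp
  | cons a w ih =>
    rw [List.map_cons, List.prod_cons, List.length_cons, pow_succ']
    exact mul_le_mul (hρ a).2 ih (List.prod_nonneg fun _ hb => by
      obtain ⟨j, -, rfl⟩ := List.mem_map.1 hb; exact (hρ j).1) ((hρ a).1.trans (hρ a).2)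

lemma sum_prod_ofFn_rpow (hρ : ∀ j, 0 ≤ ρ j) (s : ℝ) (k : ℕ) :
    ∑ v : Fin k → Fin m, ((List.ofFn v).map ρ).prod ^ s = (∑ j, ρ j ^ s) ^ k := by
  classical
  rw [← Fin.prod_const, Fintype.prod_sum]
  refine Fintype.sum_congr _ _ fun v => ?_
  rw [List.map_ofFn, List.prod_ofFn, Real.finsetProd_rpow _ _ fun i _ => hρ (v i)]
  rfl

lemma sum_mul_sum_preimage_cons_le (hρ : ∀ j, 0 < ρ j) (s : ℝ) (G : Finset (List (Fin m))) :
    ∑ j, ρ j ^ s * ∑ t ∈ G.preimage (List.cons j) List.cons_injective.injOn,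
      (t.map ρ).prod ^ s ≤ ∑ w ∈ G, (w.map ρ).prod ^ s := by
  calc ∑ j, ρ j ^ s * ∑ t ∈ G.preimage (List.cons j) List.cons_injective.injOn,
        (t.map ρ).prod ^ s
      = ∑ x ∈ Finset.univ.sigma fun j => G.preimage (List.cons j) List.cons_injective.injOn,
          ((x.1 :: x.2).map ρ).prod ^ s := by
        rw [Finset.sum_sigma]
        refine Finset.sum_congr rfl fun j _ => ?_
        rw [Finset.mul_sum]
        refine Finset.sum_congr rfl fun t _ => ?_
        rw [List.map_cons, List.prod_cons, Real.mul_rpow (hρ j).le (prod_map_pos hρ t).le]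
    _ = ∑ w ∈ (Finset.univ.sigma fun j => G.preimage (List.cons j) List.cons_injective.injOn).image
          (fun x => x.1 :: x.2), (w.map ρ).prod ^ s := by
        rw [Finset.sum_image]
        rintro ⟨i, t⟩ - ⟨j, u⟩ - hxy
        obtain ⟨rfl, rfl⟩ := List.cons_eq_cons.1 hxy
        rfl
    _ ≤ ∑ w ∈ G, (w.map ρ).prod ^ s :=
        Finset.sum_le_sum_of_subset_of_nonneg
          (Finset.image_subset_iff.2 fun x hx => Finset.mem_preimage.1 (Finset.mem_sigma.1 hx).2)
          fun w _ _ => Real.rpow_nonneg (prod_map_pos hρ w).le s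

lemma exists_forall_le_of_lt_one (hρ : ∀ j, ρ j < 1) : ∃ q ∈ Ioo (0 : ℝ) 1, ∀ j, ρ j ≤ q := by
  have hle : ∀ j, ∀ᶠ q in 𝓝[<] (1 : ℝ), ρ j ≤ q := fun j =>
    Filter.mem_of_superset (Ioo_mem_nhdsLT (hρ j)) fun _ hq => hq.1.le
  exact (Filter.Eventually.and (Ioo_mem_nhdsLT one_pos) (eventually_all.2 hle)).exists

end Words

section Cylinders

variable {X : Type*} {m : ℕ} {ρ : Fin m → ℝ} {φ : Fin m → X → X} {E : Set X}

lemma wordMap_singleton (φ : Fin m → X → X) (j : Fin m) : wordMap φ [j] = φ j := rfl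

lemma wordMap_image_subset (hE : E = ⋃ j, φ j '' E) (w : List (Fin m)) :
    wordMap φ w '' E ⊆ E := by
  induction w with
  | nil => simp [wordMap]
  | cons a w ih =>
    rw [wordMap_cons, image_comp]
    exact (image_mono ih).trans ((subset_iUnion (fun j => φ j '' E) a).trans hE.superset)

lemma wordMap_image_eq_iUnion (hE : E = ⋃ j, φ j '' E) (w : List (Fin m)) :
    wordMap φ w '' E = ⋃ j, wordMap φ (w ++ [j]) '' E := by
  conv_lhs => rw [hE]
  simp only [image_iUnion, wordMap_append, image_comp, wordMap_singleton]

lemma subset_iUnion_wordMap_ofFn (hE : E = ⋃ j, φ j '' E) (k : ℕ) :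
    E ⊆ ⋃ v : Fin k → Fin m, wordMap φ (List.ofFn v) '' E := by
  induction k with
  | zero => exact fun x hx => mem_iUnion.2 ⟨Fin.elim0, by simpa [wordMap] using hx⟩
  | succ k ih =>
    intro x hx
    rw [hE] at hx
    obtain ⟨j, y, hy, rfl⟩ := mem_iUnion.1 hx
    obtain ⟨v, hv⟩ := mem_iUnion.1 (ih hy)
    refine mem_iUnion.2 ⟨Fin.cons j v, ?_⟩
    rw [List.ofFn_cons, wordMap_cons, image_comp]
    exact mem_image_of_mem _ hv

variable [MetricSpace X]

lemma isCompact_wordMap_image (hρ : ∀ j, 0 < ρ j) (hφ : ∀ j, IsSimilarity (ρ j) (φ j))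
    (hcomp : IsCompact E) (w : List (Fin m)) : IsCompact (wordMap φ w '' E) :=
  hcomp.image ((isSimilarity_wordMap hφ w).lipschitzWith (prod_map_pos hρ w).le).continuous

lemma eq_and_mem_of_apply_mem_wordMap_cons (hρ : ∀ j, 0 < ρ j)
    (hφ : ∀ j, IsSimilarity (ρ j) (φ j)) (hE : E = ⋃ j, φ j '' E)
    (hdisj : Pairwise fun j k => Disjoint (φ j '' E) (φ k '' E))
    {x : X} (hx : x ∈ E) {j a : Fin m} {w : List (Fin m)}
    (h : φ j x ∈ wordMap φ (a :: w) '' E) : a = j ∧ x ∈ wordMap φ w '' E := by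
  rw [wordMap_cons, image_comp] at h
  obtain ⟨y, hy, hyx⟩ := h
  obtain rfl : a = j := by
    by_contra hne
    exact (hdisj hne).le_bot ⟨⟨y, wordMap_image_subset hE w hy, hyx⟩, ⟨x, hx, rfl⟩⟩
  exact ⟨rfl, (hφ a).injective (hρ a) hyx ▸ hy⟩

lemma disjoint_wordMap_image (hρ : ∀ j, 0 < ρ j) (hφ : ∀ j, IsSimilarity (ρ j) (φ j))
    (hE : E = ⋃ j, φ j '' E) (hdisj : Pairwise fun j k => Disjoint (φ j '' E) (φ k '' E))
    {v w : List (Fin m)} (hlen : v.length = w.length) (hvw : v ≠ w) :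
    Disjoint (wordMap φ v '' E) (wordMap φ w '' E) := by
  induction v generalizing w with
  | nil => exact absurd (List.length_eq_zero_iff.1 hlen.symm).symm hvw
  | cons a v ih =>
    obtain _ | ⟨b, w⟩ := w
    · simp at hlen
    rw [wordMap_cons, wordMap_cons, image_comp, image_comp]
    by_cases hab : a = b
    · subst hab
      exact (disjoint_image_iff ((hφ a).injective (hρ a))).2
        (ih (Nat.succ.inj hlen) fun h => hvw (h ▸ rfl))
    · exact (hdisj hab).mono (image_mono (wordMap_image_subset hE v))
        (image_mono (wordMap_image_subset hE w))

lemma exists_isOpen_inter_subset_wordMap_image (hρ : ∀ j, 0 < ρ j)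
    (hφ : ∀ j, IsSimilarity (ρ j) (φ j)) (hE : E = ⋃ j, φ j '' E)
    (hdisj : Pairwise fun j k => Disjoint (φ j '' E) (φ k '' E)) (hcomp : IsCompact E)
    (w : List (Fin m)) :
    ∃ O, IsOpen O ∧ wordMap φ w '' E ⊆ O ∧ E ∩ O ⊆ wordMap φ w '' E := by
  set others := {v : Fin w.length → Fin m | List.ofFn v ≠ w}
  refine ⟨(⋃ v ∈ others, wordMap φ (List.ofFn v) '' E)ᶜ, ?_, ?_, ?_⟩
  · exact (others.toFinite.isClosed_biUnion fun v _ =>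
      (isCompact_wordMap_image hρ hφ hcomp _).isClosed).isOpen_compl
  · refine subset_compl_comm.1 (iUnion₂_subset fun v hv => ?_)
    exact subset_compl_iff_disjoint_right.2 (disjoint_wordMap_image hρ hφ hE hdisj
      (List.length_ofFn) hv)
  · rintro x ⟨hxE, hxO⟩
    obtain ⟨v, hv⟩ := mem_iUnion.1 (subset_iUnion_wordMap_ofFn hE w.length hxE)
    by_cases hvw : List.ofFn v = w
    · exact hvw ▸ hv
    · exact (hxO (mem_iUnion₂.2 ⟨v, hvw, hv⟩)).elim

end Cylinders

section HausdorffMeasure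

variable {X : Type*} [MetricSpace X] {m : ℕ} {ρ : Fin m → ℝ} {φ : Fin m → X → X} {E : Set X}

theorem hausdorffMeasure_lt_top_of_eq_iUnion [MeasurableSpace X] [BorelSpace X]
    (hρ : ∀ j, ρ j ∈ Ioo (0 : ℝ) 1) (hφ : ∀ j, IsSimilarity (ρ j) (φ j))
    (hE : E = ⋃ j, φ j '' E) (hcomp : IsCompact E) {s : ℝ} (hs : 0 ≤ s)
    (hρs : ∑ j, ρ j ^ s = 1) : μH[s] E < ∞ := by
  have hρ0 : ∀ j, 0 < ρ j := fun j => (hρ j).1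
  obtain ⟨q, hq, hρq⟩ := exists_forall_le_of_lt_one fun j => (hρ j).2
  have hdiam : ∀ w : List (Fin m),
      ediam (wordMap φ w '' E) = ENNReal.ofReal (w.map ρ).prod * ediam E := fun w =>
    (isSimilarity_wordMap hφ w).ediam_image (prod_map_pos hρ0 w) E
  have hlim : Tendsto (fun k : ℕ => ENNReal.ofReal (q ^ k) * ediam E) atTop (𝓝 0) := by
    have := ENNReal.Tendsto.mul_const
      (ENNReal.tendsto_ofReal (tendsto_pow_atTop_nhds_zero_of_lt_one hq.1.le hq.2))
      (Or.inr hcomp.isBounded.ediam_ne_top)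
    rwa [ENNReal.ofReal_zero, zero_mul] at this
  have hle := Measure.hausdorffMeasure_le_liminf_sum s E _ hlim
    (fun k (v : Fin k → Fin m) => wordMap φ (List.ofFn v) '' E)
    (Eventually.of_forall fun k v => by
      rw [hdiam]
      gcongr
      simpa using prod_map_le_pow (fun j => ⟨(hρ0 j).le, hρq j⟩) (List.ofFn v))
    (Eventually.of_forall (subset_iUnion_wordMap_ofFn hE))
  have hsum : ∀ k, ∑ v : Fin k → Fin m, ediam (wordMap φ (List.ofFn v) '' E) ^ s
      = ediam E ^ s := fun k => by
    simp_rw [hdiam, ENNReal.mul_rpow_of_nonneg _ _ hs, ← Finset.sum_mul,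
      ENNReal.ofReal_rpow_of_nonneg (prod_map_pos hρ0 _).le hs]
    rw [← ENNReal.ofReal_sum_of_nonneg fun v _ => Real.rpow_nonneg (prod_map_pos hρ0 _).le s,
      sum_prod_ofFn_rpow (fun j => (hρ0 j).le), hρs, one_pow, ENNReal.ofReal_one, one_mul]
  simp only [hsum, liminf_const] at hle
  exact hle.trans_lt (ENNReal.rpow_lt_top_of_nonneg hs hcomp.isBounded.ediam_ne_top)

lemma exists_pos_le_dist_of_pairwise_disjoint {ι : Type*} [Finite ι] {K : ι → Set X}
    (hK : ∀ i, IsCompact (K i)) (hdisj : Pairwise fun i j => Disjoint (K i) (K j)) :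
    ∃ δ > 0, ∀ i j, i ≠ j → ∀ x ∈ K i, ∀ y ∈ K j, δ ≤ dist x y := by
  have hev : ∀ p : ι × ι, ∀ᶠ δ in 𝓝[>] (0 : ℝ),
      p.1 ≠ p.2 → ∀ x ∈ K p.1, ∀ y ∈ K p.2, δ ≤ dist x y := by
    rintro ⟨i, j⟩
    by_cases hij : i = j
    · exact Eventually.of_forall fun _ h => absurd hij h
    obtain ⟨r, hr, hlt⟩ := exists_pos_forall_lt_edist (hK i) (hK j).isClosed (hdisj hij)
    filter_upwards [Ioo_mem_nhdsGT hr] with δ hδ _ x hx y hy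
    have hrxy : (r : ℝ) < dist x y := by
      have := hlt x hx y hy
      rwa [edist_nndist, ENNReal.coe_lt_coe, ← NNReal.coe_lt_coe, coe_nndist] at this
    exact hδ.2.le.trans hrxy.le
  obtain ⟨δ, hδ, hδpos⟩ := ((eventually_all.2 hev).and self_mem_nhdsWithin).exists
  exact ⟨δ, hδpos, fun i j hij => hδ (i, j) hij⟩

variable {δ : ℝ}

lemma le_dist_of_mem_wordMap_append (hρ : ∀ j, 0 < ρ j) (hφ : ∀ j, IsSimilarity (ρ j) (φ j))
    (hδ : ∀ i j, i ≠ j → ∀ x ∈ φ i '' E, ∀ y ∈ φ j '' E, δ ≤ dist x y)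
    {w : List (Fin m)} {i j : Fin m} (hij : i ≠ j) {x y : X}
    (hx : x ∈ wordMap φ (w ++ [i]) '' E) (hy : y ∈ wordMap φ (w ++ [j]) '' E) :
    δ * (w.map ρ).prod ≤ dist x y := by
  rw [wordMap_append, image_comp, wordMap_singleton] at hx hy
  obtain ⟨x, hx, rfl⟩ := hx
  obtain ⟨y, hy, rfl⟩ := hy
  rw [isSimilarity_wordMap hφ w, mul_comm]
  exact mul_le_mul_of_nonneg_left (hδ i j hij x hx y hy) (prod_map_pos hρ w).le

lemma exists_subset_wordMap_image_append (hρ : ∀ j, 0 < ρ j)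
    (hφ : ∀ j, IsSimilarity (ρ j) (φ j)) (hE : E = ⋃ j, φ j '' E) (hne : E.Nonempty)
    (hδ : ∀ i j, i ≠ j → ∀ x ∈ φ i '' E, ∀ y ∈ φ j '' E, δ ≤ dist x y)
    {U : Set X} {D : ℝ} (hU : ∀ x ∈ U ∩ E, ∀ y ∈ U ∩ E, dist x y ≤ D) {w : List (Fin m)}
    (hUw : U ∩ E ⊆ wordMap φ w '' E) (hwD : D < δ * (w.map ρ).prod) :
    ∃ j, U ∩ E ⊆ wordMap φ (w ++ [j]) '' E := by
  rcases (U ∩ E).eq_empty_or_nonempty with hUE | ⟨x, hx⟩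
  · obtain ⟨x, hx⟩ := hne
    rw [hE] at hx
    obtain ⟨j, -⟩ := mem_iUnion.1 hx
    exact ⟨j, hUE ▸ empty_subset _⟩
  have hchild : ∀ y ∈ U ∩ E, ∃ i, y ∈ wordMap φ (w ++ [i]) '' E := fun y hy =>
    mem_iUnion.1 ((wordMap_image_eq_iUnion hE w) ▸ hUw hy)
  obtain ⟨j, hxj⟩ := hchild x hx
  refine ⟨j, fun y hy => ?_⟩
  obtain ⟨i, hyi⟩ := hchild y hy
  obtain rfl : i = j := by
    by_contra hij
    exact (hwD.trans_le (le_dist_of_mem_wordMap_append hρ hφ hδ hij hyi hxj)).not_ge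
      (hU y hy x hx)
  exact hyi

lemma exists_wordMap_image_superset (hρ : ∀ j, ρ j ∈ Ioo (0 : ℝ) 1)
    (hφ : ∀ j, IsSimilarity (ρ j) (φ j)) (hE : E = ⋃ j, φ j '' E) (hne : E.Nonempty)
    (hδpos : 0 < δ) (hδ : ∀ i j, i ≠ j → ∀ x ∈ φ i '' E, ∀ y ∈ φ j '' E, δ ≤ dist x y)
    {U : Set X} {D : ℝ} (hD : 0 < D) (hU : ∀ x ∈ U ∩ E, ∀ y ∈ U ∩ E, dist x y ≤ D) :
    ∃ w, U ∩ E ⊆ wordMap φ w '' E ∧ δ * (w.map ρ).prod ≤ D := by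
  have hρ0 : ∀ j, 0 < ρ j := fun j => (hρ j).1
  obtain ⟨q, hq, hρq⟩ := exists_forall_le_of_lt_one fun j => (hρ j).2
  suffices key : ∀ (k : ℕ) (w : List (Fin m)), δ * (w.map ρ).prod * q ^ k ≤ D →
      U ∩ E ⊆ wordMap φ w '' E → ∃ v, U ∩ E ⊆ wordMap φ v '' E ∧ δ * (v.map ρ).prod ≤ D by
    obtain ⟨k, hk⟩ := exists_pow_lt_of_lt_one (div_pos hD hδpos) hq.2
    refine key k [] ?_ (by simp [wordMap])
    rw [lt_div_iff₀' hδpos] at hk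
    simp [hk.le]
  intro k
  induction k with
  | zero => exact fun w hw hUw => ⟨w, hUw, by simpa using hw⟩
  | succ k ih =>
    intro w hw hUw
    by_cases hwD : δ * (w.map ρ).prod ≤ D
    · exact ⟨w, hUw, hwD⟩
    obtain ⟨j, hj⟩ :=
      exists_subset_wordMap_image_append hρ0 hφ hE hne hδ hU hUw (not_le.1 hwD)
    refine ih (w ++ [j]) ?_ hj
    have := mul_nonneg hδpos.le (prod_map_pos hρ0 w).le
    have := pow_nonneg hq.1.le k
    calc δ * ((w ++ [j]).map ρ).prod * q ^ k = δ * (w.map ρ).prod * (ρ j * q ^ k) := by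
          simp [mul_assoc]
      _ ≤ δ * (w.map ρ).prod * (q * q ^ k) := by gcongr; exact hρq j
      _ = δ * (w.map ρ).prod * q ^ (k + 1) := by rw [pow_succ']
      _ ≤ D := hw

-- The slack `ε` is needed for sets of diameter zero, which admit no cylinder with `δ ρ_w ≤ 0`.
lemma exists_wordMap_image_superset_rpow (hρ : ∀ j, ρ j ∈ Ioo (0 : ℝ) 1)
    (hφ : ∀ j, IsSimilarity (ρ j) (φ j)) (hE : E = ⋃ j, φ j '' E) (hne : E.Nonempty)
    (hδpos : 0 < δ) (hδ : ∀ i j, i ≠ j → ∀ x ∈ φ i '' E, ∀ y ∈ φ j '' E, δ ≤ dist x y)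
    {s : ℝ} (hs : 0 ≤ s) {U : Set X} (hU : ediam U ≠ ∞) {ε : ℝ≥0} (hε : 0 < ε) :
    ∃ w, U ∩ E ⊆ wordMap φ w '' E ∧
      ENNReal.ofReal ((δ * (w.map ρ).prod) ^ s) ≤ ediam U ^ s + ε := by
  set Δ := (ediam U).toReal
  obtain ⟨D, hDs, hΔD⟩ : ∃ D, D ^ s < Δ ^ s + ε ∧ Δ < D :=
    (((Real.continuousAt_rpow_const Δ s (Or.inr hs)).eventually
      (gt_mem_nhds (lt_add_of_pos_right _ hε))).filter_mono nhdsWithin_le_nhds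
      |>.and (self_mem_nhdsWithin (s := Ioi Δ))).exists
  have hΔ : 0 ≤ Δ := ENNReal.toReal_nonneg
  obtain ⟨w, hUw, hwD⟩ := exists_wordMap_image_superset hρ hφ hE hne hδpos hδ
    (hΔ.trans_lt hΔD) fun x hx y hy => by
      refine ((edist_le_ofReal hΔ).1 ?_).trans hΔD.le
      exact (edist_le_ediam_of_mem hx.1 hy.1).trans (ENNReal.ofReal_toReal hU).ge
  refine ⟨w, hUw, ?_⟩
  have hwD' : (δ * (w.map ρ).prod) ^ s ≤ Δ ^ s + ε :=
    (Real.rpow_le_rpow (mul_nonneg hδpos.le (prod_map_pos (fun j => (hρ j).1) w).le) hwD hs).trans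
      hDs.le
  calc ENNReal.ofReal ((δ * (w.map ρ).prod) ^ s) ≤ ENNReal.ofReal (Δ ^ s + ε) :=
        ENNReal.ofReal_le_ofReal hwD'
    _ = ediam U ^ s + ε := by
        rw [ENNReal.ofReal_add (Real.rpow_nonneg hΔ s) ε.coe_nonneg, ENNReal.ofReal_coe_nnreal,
          ← ENNReal.ofReal_rpow_of_nonneg hΔ hs, ENNReal.ofReal_toReal hU]

lemma subset_biUnion_preimage_cons (hρ : ∀ j, 0 < ρ j)
    (hφ : ∀ j, IsSimilarity (ρ j) (φ j)) (hE : E = ⋃ j, φ j '' E)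
    (hdisj : Pairwise fun j k => Disjoint (φ j '' E) (φ k '' E)) {G : Finset (List (Fin m))}
    (hnil : [] ∉ G) (hG : E ⊆ ⋃ w ∈ G, wordMap φ w '' E) (j : Fin m) :
    E ⊆ ⋃ t ∈ G.preimage (List.cons j) List.cons_injective.injOn, wordMap φ t '' E := by
  intro x hx
  obtain ⟨w, hw, hxw⟩ := mem_iUnion₂.1 <|
    hG (wordMap_image_subset hE [j] (mem_image_of_mem (φ j) hx))
  obtain _ | ⟨a, t⟩ := w
  · exact absurd hw hnil
  obtain ⟨rfl, hxt⟩ := eq_and_mem_of_apply_mem_wordMap_cons hρ hφ hE hdisj hx hxw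
  exact mem_iUnion₂.2 ⟨t, Finset.mem_preimage.2 hw, hxt⟩

lemma one_le_sum_rpow_of_subset_biUnion (hρ : ∀ j, 0 < ρ j)
    (hφ : ∀ j, IsSimilarity (ρ j) (φ j)) (hE : E = ⋃ j, φ j '' E)
    (hdisj : Pairwise fun j k => Disjoint (φ j '' E) (φ k '' E)) (hne : E.Nonempty)
    {s : ℝ} (hρs : ∑ j, ρ j ^ s = 1) (N : ℕ) (G : Finset (List (Fin m)))
    (hN : ∀ w ∈ G, w.length ≤ N) (hG : E ⊆ ⋃ w ∈ G, wordMap φ w '' E) :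
    1 ≤ ∑ w ∈ G, (w.map ρ).prod ^ s := by
  have hone : ∀ H : Finset (List (Fin m)), [] ∈ H → 1 ≤ ∑ w ∈ H, (w.map ρ).prod ^ s :=
    fun H hnil => by
      simpa using Finset.single_le_sum (fun w _ => Real.rpow_nonneg (prod_map_pos hρ w).le s) hnil
  induction N generalizing G with
  | zero =>
    obtain ⟨x, hx⟩ := hne
    obtain ⟨w, hw, -⟩ := mem_iUnion₂.1 (hG hx)
    exact hone G (List.length_eq_zero_iff.1 (Nat.le_zero.1 (hN w hw)) ▸ hw)
  | succ N ih =>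
    by_cases hnil : [] ∈ G
    · exact hone G hnil
    refine le_trans ?_ (sum_mul_sum_preimage_cons_le hρ s G)
    calc (1 : ℝ) = ∑ j, ρ j ^ s * 1 := by simp [hρs]
      _ ≤ _ := by
        gcongr with j
        · exact Real.rpow_nonneg (hρ j).le s
        · refine ih _ (fun t ht => ?_) (subset_biUnion_preimage_cons hρ hφ hE hdisj hnil hG j)
          simpa using hN _ (Finset.mem_preimage.1 ht)

lemma one_le_tsum_rpow_of_subset_iUnion (hρ : ∀ j, 0 < ρ j)
    (hφ : ∀ j, IsSimilarity (ρ j) (φ j)) (hE : E = ⋃ j, φ j '' E)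
    (hdisj : Pairwise fun j k => Disjoint (φ j '' E) (φ k '' E)) (hne : E.Nonempty)
    (hcomp : IsCompact E) {s : ℝ} (hρs : ∑ j, ρ j ^ s = 1) {ι : Type*} (w : ι → List (Fin m))
    (hcov : E ⊆ ⋃ i, wordMap φ (w i) '' E) :
    1 ≤ ∑' i, ENNReal.ofReal (((w i).map ρ).prod ^ s) := by
  classical
  choose O hO hwO hOE using fun i =>
    exists_isOpen_inter_subset_wordMap_image hρ hφ hE hdisj hcomp (w i)
  obtain ⟨S, hS⟩ := hcomp.elim_finite_subcover O hO (hcov.trans (iUnion_mono hwO))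
  have hG : E ⊆ ⋃ v ∈ S.image w, wordMap φ v '' E := fun x hx => by
    obtain ⟨i, hi, hxi⟩ := mem_iUnion₂.1 (hS hx)
    exact mem_iUnion₂.2 ⟨w i, Finset.mem_image_of_mem w hi, hOE i ⟨hx, hxi⟩⟩
  have hnonneg : ∀ v : List (Fin m), 0 ≤ (v.map ρ).prod ^ s := fun v =>
    Real.rpow_nonneg (prod_map_pos hρ v).le s
  calc (1 : ℝ≥0∞) = ENNReal.ofReal 1 := ENNReal.ofReal_one.symm
    _ ≤ ENNReal.ofReal (∑ v ∈ S.image w, (v.map ρ).prod ^ s) :=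
        ENNReal.ofReal_le_ofReal <| one_le_sum_rpow_of_subset_biUnion hρ hφ hE hdisj hne hρs _
          _ (fun _ hv => Finset.le_sup (f := List.length) hv) hG
    _ ≤ ENNReal.ofReal (∑ i ∈ S, ((w i).map ρ).prod ^ s) :=
        ENNReal.ofReal_le_ofReal (Finset.sum_image_le_of_nonneg fun v _ => hnonneg v)
    _ = ∑ i ∈ S, ENNReal.ofReal (((w i).map ρ).prod ^ s) :=
        ENNReal.ofReal_sum_of_nonneg fun i _ => hnonneg (w i)
    _ ≤ ∑' i, ENNReal.ofReal (((w i).map ρ).prod ^ s) := ENNReal.sum_le_tsum S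

theorem IsDustLike.hausdorffMeasure_pos [MeasurableSpace X] [BorelSpace X] (h : IsDustLike ρ E)
    (hρ : ∀ j, ρ j ∈ Ioo (0 : ℝ) 1) {s : ℝ} (hs : 0 < s) (hρs : ∑ j, ρ j ^ s = 1) :
    0 < μH[s] E := by
  obtain ⟨hne, hcomp, φ, hφ, hE, hdisj⟩ := h
  have hρ0 : ∀ j, 0 < ρ j := fun j => (hρ j).1
  obtain ⟨δ, hδpos, hδ⟩ := exists_pos_le_dist_of_pairwise_disjoint
    (fun j => hcomp.image ((hφ j).lipschitzWith (hρ0 j).le).continuous) hdisj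
  refine (ENNReal.ofReal_pos.2 (Real.rpow_pos_of_pos hδpos s)).trans_le ?_
  rw [Measure.hausdorffMeasure_apply]
  refine le_iSup₂_of_le 1 one_pos (le_iInf fun t => le_iInf fun hcov => le_iInf fun hdiam => ?_)
  refine ENNReal.le_of_forall_pos_le_add fun ε hε _ => ?_
  obtain ⟨ε', hε', hε'sum⟩ := ENNReal.exists_pos_sum_of_countable (ENNReal.coe_ne_zero.2 hε.ne') ℕ
  choose w hw hwle using fun n => exists_wordMap_image_superset_rpow hρ hφ hE hne hδpos hδ hs.le
    (ne_top_of_le_ne_top ENNReal.one_ne_top (hdiam n)) (hε' n)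
  have hcovw : E ⊆ ⋃ n, wordMap φ (w n) '' E := fun x hx => by
    obtain ⟨n, hn⟩ := mem_iUnion.1 (hcov hx)
    exact mem_iUnion.2 ⟨n, hw n ⟨hn, hx⟩⟩
  have hdiam_le : ∀ n, ediam (t n) ^ s ≤ ⨆ _ : (t n).Nonempty, ediam (t n) ^ s := fun n => by
    rcases (t n).eq_empty_or_nonempty with h | h
    · simp [h, hs]
    · exact le_iSup (fun _ => ediam (t n) ^ s) h
  calc ENNReal.ofReal (δ ^ s)
      ≤ ENNReal.ofReal (δ ^ s) * ∑' n, ENNReal.ofReal (((w n).map ρ).prod ^ s) :=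
        le_mul_of_one_le_right' (one_le_tsum_rpow_of_subset_iUnion hρ0 hφ hE hdisj hne hcomp hρs w hcovw)
    _ = ∑' n, ENNReal.ofReal ((δ * ((w n).map ρ).prod) ^ s) := by
        rw [← ENNReal.tsum_mul_left]
        refine tsum_congr fun n => ?_
        rw [← ENNReal.ofReal_mul (Real.rpow_nonneg hδpos.le s),
          Real.mul_rpow hδpos.le (prod_map_pos hρ0 _).le]
    _ ≤ ∑' n, (ediam (t n) ^ s + ε' n) := ENNReal.tsum_le_tsum hwle
    _ = ∑' n, ediam (t n) ^ s + ∑' n, (ε' n : ℝ≥0∞) := ENNReal.tsum_add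
    _ ≤ ∑' n, (⨆ _ : (t n).Nonempty, ediam (t n) ^ s) + ε :=
        add_le_add (ENNReal.tsum_le_tsum hdiam_le) hε'sum.le

end HausdorffMeasure

section MaxDecomp

variable {X : Type*} [MetricSpace X] {m n n₀ p : ℕ} {ρ : Fin m → ℝ} {φ : Fin m → X → X}
  {τ : Fin n → ℝ} {ψ : Fin n → X → X} {E F A : Set X} {k : List (Fin n)}
  {js : Fin p → List (Fin n)}

lemma diam_wordMap_image_div (hρ : ∀ j, 0 < ρ j) (hφ : ∀ j, IsSimilarity (ρ j) (φ j))
    (hτ : ∀ j, 0 < τ j) (hψ : ∀ j, IsSimilarity (τ j) (ψ j)) (v : List (Fin m))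
    (w : List (Fin n)) :
    diam (wordMap φ v '' E) / diam (wordMap ψ w '' F) =
      (v.map ρ).prod / (w.map τ).prod * (diam E / diam F) := by
  rw [(isSimilarity_wordMap hφ v).diam_image (prod_map_pos hρ v),
    (isSimilarity_wordMap hψ w).diam_image (prod_map_pos hτ w), mul_div_mul_comm]

lemma hausdorffMeasure_wordMap_image_div [MeasurableSpace X] [BorelSpace X]
    (hρ : ∀ j, 0 < ρ j) (hφ : ∀ j, IsSimilarity (ρ j) (φ j))
    (hτ : ∀ j, 0 < τ j) (hψ : ∀ j, IsSimilarity (τ j) (ψ j)) {s : ℝ} (hs : 0 ≤ s)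
    (v : List (Fin m)) (w : List (Fin n)) :
    μH[s] (wordMap φ v '' E) / μH[s] (wordMap ψ w '' F) =
      ENNReal.ofReal ((v.map ρ).prod / (w.map τ).prod) ^ s * (μH[s] E / μH[s] F) := by
  have hw := prod_map_pos hτ w
  rw [(isSimilarity_wordMap hφ v).hausdorffMeasure_image (prod_map_pos hρ v) hs,
    (isSimilarity_wordMap hψ w).hausdorffMeasure_image hw hs, ENNReal.mul_div_mul_comm
      (Or.inl (ENNReal.rpow_pos (ENNReal.ofReal_pos.2 hw) ENNReal.ofReal_ne_top).ne')
      (Or.inl (ENNReal.rpow_ne_top_of_nonneg hs ENNReal.ofReal_ne_top)),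
    ENNReal.ofReal_div_of_pos hw, ENNReal.div_rpow_of_nonneg _ _ hs]

lemma IsMaxDecomp.injective (hF : F.Nonempty) (h : IsMaxDecomp ψ F n₀ A k p js) :
    Function.Injective js := by
  intro r r' hrr'
  by_contra hne
  have hdisj : Disjoint (wordMap ψ (k ++ js r) '' F) (wordMap ψ (k ++ js r') '' F) :=
    h.2.2.2.1 hne
  rw [hrr'] at hdisj
  obtain ⟨x, hx⟩ := hF.image (wordMap ψ (k ++ js r'))
  exact hdisj.le_bot ⟨hx, hx⟩

lemma prod_div_prod_eq_of_isMaxDecomp [MeasurableSpace X] [BorelSpace X]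
    (hρ : ∀ j, 0 < ρ j) (hφ : ∀ j, IsSimilarity (ρ j) (φ j))
    (hτ : ∀ j, 0 < τ j) (hψ : ∀ j, IsSimilarity (τ j) (ψ j))
    (hFcomp : IsCompact F) (hFne : F.Nonempty) {s : ℝ} (hs : 0 < s)
    (hE0 : 0 < μH[s] E) (hEtop : μH[s] E < ∞) (hFtop : μH[s] F < ∞) {c : ℝ} (hc : 0 < c)
    {w : List (Fin m)} (hA : μH[s] A = ENNReal.ofReal c * μH[s] (wordMap φ w '' E))
    (h : IsMaxDecomp ψ F n₀ A k p js) :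
    (w.map ρ).prod / (k.map τ).prod =
      ((∑ v ∈ Finset.univ.image js, (v.map τ).prod ^ s) *
        ((μH[s] F).toReal / (c * (μH[s] E).toReal))) ^ s⁻¹ := by
  have hmeas : ENNReal.ofReal c * (ENNReal.ofReal (w.map ρ).prod ^ s * μH[s] E) =
      ∑ r, ENNReal.ofReal ((k ++ js r).map τ).prod ^ s * μH[s] F := by
    rw [← (isSimilarity_wordMap hφ w).hausdorffMeasure_image (prod_map_pos hρ w) hs.le, ← hA,
      h.2.2.2.2, measure_iUnion h.2.2.2.1 fun r =>
        (isCompact_wordMap_image hτ hψ hFcomp _).measurableSet, tsum_fintype]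
    exact Finset.sum_congr rfl fun r _ =>
      (isSimilarity_wordMap hψ _).hausdorffMeasure_image (prod_map_pos hτ _) hs.le F
  have hreal := congrArg ENNReal.toReal hmeas
  simp only [ENNReal.toReal_mul, ENNReal.toReal_ofReal hc.le, ← ENNReal.toReal_rpow,
    ENNReal.toReal_ofReal (prod_map_pos hρ _).le, ENNReal.toReal_ofReal (prod_map_pos hτ _).le,
    ENNReal.toReal_sum fun r _ => ENNReal.mul_ne_top
      (ENNReal.rpow_ne_top_of_nonneg hs.le ENNReal.ofReal_ne_top) hFtop.ne] at hreal
  simp only [List.map_append, List.prod_append,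
    Real.mul_rpow (prod_map_pos hτ k).le (prod_map_pos hτ _).le, mul_assoc, ← Finset.mul_sum,
    ← Finset.sum_mul] at hreal
  have ha := prod_map_pos hρ w
  have hb := prod_map_pos hτ k
  have heE : 0 < (μH[s] E).toReal := ENNReal.toReal_pos hE0.ne' hEtop.ne
  rw [Finset.sum_image fun r _ r' _ => (h.injective hFne ·),
    ← Real.rpow_rpow_inv (div_pos ha hb).le hs.ne', Real.div_rpow ha.le hb.le]
  congr 1
  field_simp
  linear_combination hreal

theorem exists_finite_prod_div_prod_mem [MeasurableSpace X] [BorelSpace X]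
    (hρ : ∀ j, 0 < ρ j) (hφ : ∀ j, IsSimilarity (ρ j) (φ j))
    (hτ : ∀ j, 0 < τ j) (hψ : ∀ j, IsSimilarity (τ j) (ψ j))
    (hFcomp : IsCompact F) (hFne : F.Nonempty) {s : ℝ} (hs : 0 < s)
    (hE0 : 0 < μH[s] E) (hEtop : μH[s] E < ∞) (hFtop : μH[s] F < ∞) {c : ℝ} (hc : 0 < c)
    (n₀ : ℕ) :
    ∃ R : Set ℝ, R.Finite ∧ ∀ (w : List (Fin m)) (A : Set X) (k : List (Fin n)) (p : ℕ)
      (js : Fin p → List (Fin n)) (r : Fin p),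
      μH[s] A = ENNReal.ofReal c * μH[s] (wordMap φ w '' E) → IsMaxDecomp ψ F n₀ A k p js →
      (w.map ρ).prod / ((k ++ js r).map τ).prod ∈ R := by
  set W := (List.finite_length_eq (Fin n) n₀).toFinset
  set K := (μH[s] F).toReal / (c * (μH[s] E).toReal)
  have hsums := (W.powerset.image fun S => ∑ v ∈ S, (v.map τ).prod ^ s).finite_toSet
  refine ⟨_, (hsums.image fun σ => (σ * K) ^ s⁻¹).image2 (· / ·)
    (W.finite_toSet.image fun v => (v.map τ).prod), fun w A k p js r hA h => ?_⟩
  have hW : ∀ r, js r ∈ W := fun r => (Set.Finite.mem_toFinset _).2 (h.2.2.1 r)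
  refine ⟨_, ⟨_, Finset.mem_image.2 ⟨Finset.univ.image js, ?_, rfl⟩,
    (prod_div_prod_eq_of_isMaxDecomp hρ hφ hτ hψ hFcomp hFne hs hE0 hEtop hFtop hc hA h).symm⟩,
    _, ⟨js r, hW r, rfl⟩, ?_⟩
  · exact Finset.mem_powerset.2 (Finset.image_subset_iff.2 fun r _ => hW r)
  · simp only [List.map_append, List.prod_append, div_div]

end MaxDecomp

theorem ratio_sets_M_M'_M''_finite_general
    (d m n : ℕ)
    (ρ : Fin m → ℝ) (τ : Fin n → ℝ)
    (hρ : IsContractionVector d m ρ) (hτ : IsContractionVector d n τ)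
    (E F : Set (EuclideanSpace ℝ (Fin d)))
    (hEne : E.Nonempty) (hEcomp : IsCompact E)
    (φ : Fin m → EuclideanSpace ℝ (Fin d) → EuclideanSpace ℝ (Fin d))
    (hφ : ∀ j, IsSimilarity (ρ j) (φ j))
    (hEdef : E = ⋃ j, φ j '' E)
    (hEdisj : Pairwise fun j k => Disjoint (φ j '' E) (φ k '' E))
    (hFne : F.Nonempty) (hFcomp : IsCompact F)
    (ψ : Fin n → EuclideanSpace ℝ (Fin d) → EuclideanSpace ℝ (Fin d))
    (hψ : ∀ j, IsSimilarity (τ j) (ψ j))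
    (hFdef : F = ⋃ j, ψ j '' F)
    (f : EuclideanSpace ℝ (Fin d) → EuclideanSpace ℝ (Fin d))
    (s : ℝ) (hs : 0 < s)
    (hρs : ∑ j, ρ j ^ s = 1) (hτs : ∑ j, τ j ^ s = 1)
    (n₀ : ℕ)
    -- `E_{i₀}` is a stable cylinder for `f`
    (i₀ : List (Fin m)) (c : ℝ) (hc : 0 < c)
    (hstable : ∀ j : List (Fin m),
      μH[s] (f '' (wordMap φ (i₀ ++ j) '' E))
        = ENNReal.ofReal c * μH[s] (wordMap φ (i₀ ++ j) '' E)) :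
    Set.Finite {x : ENNReal |
      ∃ (i : List (Fin m)) (k : List (Fin n)) (p : ℕ) (js : Fin p → List (Fin n)) (r : Fin p),
        i ≠ [] ∧ IsMaxDecomp ψ F n₀ (f '' (wordMap φ (i₀ ++ i) '' E)) k p js ∧
        x = μH[s] (wordMap φ (i₀ ++ i) '' E) / μH[s] (wordMap ψ (k ++ js r) '' F)} ∧
    Set.Finite {x : ℝ |
      ∃ (i : List (Fin m)) (k : List (Fin n)) (p : ℕ) (js : Fin p → List (Fin n)) (r : Fin p),
        i ≠ [] ∧ IsMaxDecomp ψ F n₀ (f '' (wordMap φ (i₀ ++ i) '' E)) k p js ∧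
        x = Metric.diam (wordMap φ (i₀ ++ i) '' E) / Metric.diam (wordMap ψ (k ++ js r) '' F)} ∧
    Set.Finite {x : ℝ |
      ∃ (i : List (Fin m)) (k : List (Fin n)) (p : ℕ) (js : Fin p → List (Fin n)) (r : Fin p),
        i ≠ [] ∧ IsMaxDecomp ψ F n₀ (f '' (wordMap φ (i₀ ++ i) '' E)) k p js ∧
        x = ((i₀ ++ i).map ρ).prod / ((k ++ js r).map τ).prod} := by
  obtain ⟨hρ01, -⟩ := hρ
  obtain ⟨hτ01, -⟩ := hτ
  have hρ0 : ∀ j, 0 < ρ j := fun j => (hρ01 j).1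
  have hτ0 : ∀ j, 0 < τ j := fun j => (hτ01 j).1
  obtain ⟨R, hR, hmem⟩ := exists_finite_prod_div_prod_mem hρ0 hφ hτ0 hψ hFcomp hFne hs
    (IsDustLike.hausdorffMeasure_pos ⟨hEne, hEcomp, φ, hφ, hEdef, hEdisj⟩ hρ01 hs hρs)
    (hausdorffMeasure_lt_top_of_eq_iUnion hρ01 hφ hEdef hEcomp hs.le hρs)
    (hausdorffMeasure_lt_top_of_eq_iUnion hτ01 hψ hFdef hFcomp hs.le hτs) hc n₀
  have hM'' : Set.Finite {x : ℝ | ∃ (i : List (Fin m)) (k : List (Fin n)) (p : ℕ)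
      (js : Fin p → List (Fin n)) (r : Fin p), i ≠ [] ∧
        IsMaxDecomp ψ F n₀ (f '' (wordMap φ (i₀ ++ i) '' E)) k p js ∧
        x = ((i₀ ++ i).map ρ).prod / ((k ++ js r).map τ).prod} :=
    hR.subset fun _ ⟨i, k, p, js, r, _, h, hx⟩ => hx ▸ hmem _ _ k p js r (hstable i) h
  refine ⟨(hM''.image fun x => ENNReal.ofReal x ^ s * (μH[s] E / μH[s] F)).subset ?_,
    (hM''.image (· * (diam E / diam F))).subset ?_, hM''⟩
  all_goals
    rintro _ ⟨i, k, p, js, r, hi, h, rfl⟩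
    refine ⟨_, ⟨i, k, p, js, r, hi, h, rfl⟩, ?_⟩
  · exact (hausdorffMeasure_wordMap_image_div hρ0 hφ hτ0 hψ hs.le _ _).symm
  · exact (diam_wordMap_image_div hρ0 hφ hτ0 hψ _ _).symm

theorem ratio_sets_M_M'_M''_finite
    (d m n : ℕ) (hd : 1 ≤ d)
    (ρ : Fin m → ℝ) (τ : Fin n → ℝ)
    (hρ : IsContractionVector d m ρ) (hτ : IsContractionVector d n τ)
    (E F : Set (EuclideanSpace ℝ (Fin d)))
    (hEne : E.Nonempty) (hEcomp : IsCompact E)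
    (φ : Fin m → EuclideanSpace ℝ (Fin d) → EuclideanSpace ℝ (Fin d))
    (hφ : ∀ j, IsSimilarity (ρ j) (φ j))
    (hEdef : E = ⋃ j, φ j '' E)
    (hEdisj : Pairwise fun j k => Disjoint (φ j '' E) (φ k '' E))
    (hFne : F.Nonempty) (hFcomp : IsCompact F)
    (ψ : Fin n → EuclideanSpace ℝ (Fin d) → EuclideanSpace ℝ (Fin d))
    (hψ : ∀ j, IsSimilarity (τ j) (ψ j))
    (hFdef : F = ⋃ j, ψ j '' F)
    (hFdisj : Pairwise fun j k => Disjoint (ψ j '' F) (ψ k '' F))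
    (f : EuclideanSpace ℝ (Fin d) → EuclideanSpace ℝ (Fin d)) (C : ℝ) (hC : 0 < C)
    (hbij : Set.BijOn f E F)
    (hlip : ∀ x ∈ E, ∀ y ∈ E,
      C⁻¹ * dist x y ≤ dist (f x) (f y) ∧ dist (f x) (f y) ≤ C * dist x y)
    (s : ℝ) (hs : 0 < s)
    (hρs : ∑ j, ρ j ^ s = 1) (hτs : ∑ j, τ j ^ s = 1)
    -- `n₀` is such that the image of every cylinder admits a maximum decomposition
    (n₀ : ℕ)
    (hdecomp : ∀ w : List (Fin m), w ≠ [] →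
      ∃ (k : List (Fin n)) (p : ℕ) (js : Fin p → List (Fin n)),
        IsMaxDecomp ψ F n₀ (f '' (wordMap φ w '' E)) k p js)
    -- `E_{i₀}` is a stable cylinder for `f`
    (i₀ : List (Fin m)) (hi₀ : i₀ ≠ []) (c : ℝ) (hc : 0 < c)
    (hstable : ∀ j : List (Fin m),
      μH[s] (f '' (wordMap φ (i₀ ++ j) '' E))
        = ENNReal.ofReal c * μH[s] (wordMap φ (i₀ ++ j) '' E)) :
    Set.Finite {x : ENNReal |
      ∃ (i : List (Fin m)) (k : List (Fin n)) (p : ℕ) (js : Fin p → List (Fin n)) (r : Fin p),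
        i ≠ [] ∧ IsMaxDecomp ψ F n₀ (f '' (wordMap φ (i₀ ++ i) '' E)) k p js ∧
        x = μH[s] (wordMap φ (i₀ ++ i) '' E) / μH[s] (wordMap ψ (k ++ js r) '' F)} ∧
    Set.Finite {x : ℝ |
      ∃ (i : List (Fin m)) (k : List (Fin n)) (p : ℕ) (js : Fin p → List (Fin n)) (r : Fin p),
        i ≠ [] ∧ IsMaxDecomp ψ F n₀ (f '' (wordMap φ (i₀ ++ i) '' E)) k p js ∧
        x = Metric.diam (wordMap φ (i₀ ++ i) '' E) / Metric.diam (wordMap ψ (k ++ js r) '' F)} ∧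
    Set.Finite {x : ℝ |
      ∃ (i : List (Fin m)) (k : List (Fin n)) (p : ℕ) (js : Fin p → List (Fin n)) (r : Fin p),
        i ≠ [] ∧ IsMaxDecomp ψ F n₀ (f '' (wordMap φ (i₀ ++ i) '' E)) k p js ∧
        x = ((i₀ ++ i).map ρ).prod / ((k ++ js r).map τ).prod} :=
  ratio_sets_M_M'_M''_finite_general d m n ρ τ hρ hτ E F hEne hEcomp φ hφ hEdef hEdisj hFne hFcomp ψ
    hψ hFdef f s hs hρs hτs n₀ i₀ c hc hstable
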